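/- Let A and B be nonnegative-integer random variables with B ~ Po(ε) ∗ Bi(ν, ϖ) (the convolution, i.e., the sum of independent Poisson(ε) and Binomial(ν, ϖ) variables), and suppose the conditional distribution of A given B is Po(ζ) ∗ Bi(B, δ) (sum of an independent Poisson(ζ) variable and a Binomial(B, δ) thinning of B). Then A ~ Po(ζ + δε) ∗ Bi(ν, δϖ). -/

import Mathlib

open MeasureTheory ProbabilityTheory

/-- Poisson probability mass function with mean `ε`. -/
noncomputable def poissonP (ε : ℝ) (k : ℕ) : ℝ :=
  Real.exp (-ε) * ε ^ k / (Nat.factorial k)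

/-- Binomial probability mass function with `n` trials, success probability `p`. -/
noncomputable def binomP (n : ℕ) (p : ℝ) (k : ℕ) : ℝ :=
  (n.choose k : ℝ) * p ^ k * (1 - p) ^ (n - k)

/-- Convolution of two pmfs on ℕ. -/
noncomputable def conv (f g : ℕ → ℝ) (k : ℕ) : ℝ :=
  ∑ j ∈ Finset.range (k + 1), f j * g (k - j)

lemma binomP_nonneg {n : ℕ} {p : ℝ} (h0 : 0 ≤ p) (h1 : p ≤ 1) (k : ℕ) : 0 ≤ binomP n p k := by
  have : (0:ℝ) ≤ 1 - p := by linarith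
  unfold binomP; positivity

lemma poissonP_nonneg {ε : ℝ} (hε : 0 ≤ ε) (k : ℕ) : 0 ≤ poissonP ε k := by
  unfold poissonP; positivity

lemma binomP_eq_zero {n k : ℕ} (p : ℝ) (h : n < k) : binomP n p k = 0 := by
  simp [binomP, Nat.choose_eq_zero_of_lt h]

lemma conv_nonneg {f g : ℕ → ℝ} (hf : ∀ k, 0 ≤ f k) (hg : ∀ k, 0 ≤ g k) (k : ℕ) :
    0 ≤ conv f g k :=
  Finset.sum_nonneg fun j _ => mul_nonneg (hf j) (hg (k - j))

lemma binomP_add (m n : ℕ) (p : ℝ) (i : ℕ) :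
    binomP (m + n) p i = ∑ k ∈ Finset.range (i + 1), binomP m p k * binomP n p (i - k) := by
  have hterm : ∀ k ∈ Finset.range (i + 1),
      binomP m p k * binomP n p (i - k)
        = ((m.choose k : ℝ) * (n.choose (i - k) : ℝ)) * (p ^ i * (1 - p) ^ (m + n - i)) := by
    intro k hk
    simp only [Finset.mem_range, Nat.lt_succ_iff] at hk
    by_cases hm : k ≤ m
    · by_cases hn : i - k ≤ n
      · have e1 : k + (i - k) = i := by omega
        have e2 : (m - k) + (n - (i - k)) = m + n - i := by omega
        have hp : p ^ k * p ^ (i - k) = p ^ i := by rw [← pow_add, e1]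
        have hq : (1 - p) ^ (m - k) * (1 - p) ^ (n - (i - k)) = (1 - p) ^ (m + n - i) := by
          rw [← pow_add, e2]
        unfold binomP
        rw [← hp, ← hq]; ring
      · push_neg at hn
        rw [show binomP n p (i-k) = 0 from binomP_eq_zero p hn,
          show ((n.choose (i-k) : ℝ)) = 0 by exact_mod_cast Nat.choose_eq_zero_of_lt hn]
        ring
    · push_neg at hm
      rw [show binomP m p k = 0 from binomP_eq_zero p hm,
        show ((m.choose k : ℝ)) = 0 by exact_mod_cast Nat.choose_eq_zero_of_lt hm]
      ring
  rw [Finset.sum_congr rfl hterm, ← Finset.sum_mul]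
  have hv : ∑ k ∈ Finset.range (i + 1), ((m.choose k : ℝ) * (n.choose (i - k) : ℝ))
      = ((m + n).choose i : ℝ) := by
    rw [Nat.add_choose_eq, Finset.Nat.sum_antidiagonal_eq_sum_range_succ_mk]
    push_cast
    rfl
  rw [hv]
  unfold binomP
  ring

lemma binomP_thin (ν : ℕ) (ϖ δ : ℝ) (k : ℕ) :
    ∑ j ∈ Finset.range (ν + 1), binomP ν ϖ j * binomP j δ k = binomP ν (δ * ϖ) k := by
  by_cases hk : k ≤ ν
  · have hstep : ∑ j ∈ Finset.range (ν + 1), binomP ν ϖ j * binomP j δ k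
        = ∑ j ∈ Finset.Ico k (ν + 1), binomP ν ϖ j * binomP j δ k := by
      refine (Finset.sum_subset ?_ ?_).symm
      · intro j hj
        simp only [Finset.mem_Ico] at hj
        simp only [Finset.mem_range]; omega
      · intro j hj hj'
        simp only [Finset.mem_range] at hj
        simp only [Finset.mem_Ico, not_and, not_le] at hj'
        have : j < k := by omega
        rw [binomP_eq_zero δ this, mul_zero]
    rw [hstep, Finset.sum_Ico_eq_sum_range]
    have hr : ν + 1 - k = (ν - k) + 1 := by omega
    rw [hr]
    have hterm : ∀ m ∈ Finset.range ((ν - k) + 1),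
        binomP ν ϖ (k + m) * binomP (k + m) δ k
          = ((ν.choose k : ℝ) * (δ * ϖ) ^ k)
            * ((ϖ * (1 - δ)) ^ m * (1 - ϖ) ^ ((ν - k) - m) * ((ν - k).choose m : ℝ)) := by
      intro m hm
      simp only [Finset.mem_range, Nat.lt_succ_iff] at hm
      have hkm : k + m ≤ ν := by omega
      have hc : (ν.choose (k + m) : ℝ) * ((k + m).choose k : ℝ)
          = (ν.choose k : ℝ) * ((ν - k).choose m : ℝ) := by
        have h := Nat.choose_mul (n := ν) (Nat.le_add_right k m)
        have e : (k + m) - k = m := by omega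
        rw [e] at h
        exact_mod_cast congrArg (Nat.cast : ℕ → ℝ) h
      have e1 : k + m - k = m := by omega
      have e2 : ν - (k + m) = (ν - k) - m := by omega
      unfold binomP
      rw [e1, e2, pow_add, mul_pow, mul_pow]
      linear_combination (ϖ ^ k * ϖ ^ m * (1 - ϖ) ^ ((ν - k) - m) * δ ^ k * (1 - δ) ^ m) * hc
    rw [Finset.sum_congr rfl hterm, ← Finset.mul_sum, ← add_pow]
    have : ϖ * (1 - δ) + (1 - ϖ) = 1 - δ * ϖ := by ring
    rw [this]
    unfold binomP
    ring
  · push_neg at hk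
    rw [Finset.sum_eq_zero, binomP, Nat.choose_eq_zero_of_lt hk]
    · simp
    · intro j hj
      simp only [Finset.mem_range, Nat.lt_succ_iff] at hj
      rw [binomP_eq_zero δ (by omega), mul_zero]

lemma sum_binomP (n : ℕ) (p : ℝ) : ∑ k ∈ Finset.range (n + 1), binomP n p k = 1 := by
  have h := add_pow p (1 - p) n
  have h1 : p + (1 - p) = 1 := by ring
  rw [h1, one_pow] at h
  rw [h]
  exact Finset.sum_congr rfl fun k _ => by unfold binomP; ring

lemma conv_poissonP (x y : ℝ) : conv (poissonP x) (poissonP y) = poissonP (x + y) := by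
  funext k
  unfold conv poissonP
  rw [neg_add, Real.exp_add, add_pow, Finset.mul_sum, Finset.sum_div]
  refine Finset.sum_congr rfl fun j hj => ?_
  simp only [Finset.mem_range, Nat.lt_succ_iff] at hj
  have hc : (k.choose j : ℝ) * (Nat.factorial j : ℝ) * (Nat.factorial (k - j) : ℝ) = (Nat.factorial k : ℝ) := by
    exact_mod_cast congrArg (Nat.cast : ℕ → ℝ) (Nat.choose_mul_factorial_mul_factorial hj)
  have hj' : ((Nat.factorial j : ℝ)) ≠ 0 := by exact_mod_cast Nat.factorial_ne_zero j
  have hkj : ((Nat.factorial (k - j) : ℝ)) ≠ 0 := by exact_mod_cast Nat.factorial_ne_zero (k - j)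
  have hk : ((Nat.factorial k : ℝ)) ≠ 0 := by exact_mod_cast Nat.factorial_ne_zero k
  field_simp
  linear_combination (-(x ^ j * y ^ (k - j))) * hc
lemma tsum_pow_div_factorial (x : ℝ) : ∑' n : ℕ, x ^ n / (Nat.factorial n) = Real.exp x := by
  rw [Real.exp_eq_exp_ℝ, NormedSpace.exp_eq_tsum_div]

lemma poissonP_eq (x : ℝ) (k : ℕ) :
    poissonP x k = Real.exp (-x) * (x ^ k / (Nat.factorial k)) := by
  unfold poissonP; ring

lemma summable_poissonP (x : ℝ) : Summable (poissonP x) := by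
  have : poissonP x = fun k => Real.exp (-x) * (x ^ k / (Nat.factorial k)) :=
    funext (poissonP_eq x)
  rw [this]
  exact (Real.summable_pow_div_factorial x).mul_left _

lemma tsum_poissonP (x : ℝ) : ∑' k, poissonP x k = 1 := by
  simp_rw [poissonP_eq]
  rw [tsum_mul_left, tsum_pow_div_factorial, ← Real.exp_add]
  simp

/-- shift lemma: if `F` vanishes below `j` and the shifted function is summable,
then `F` is summable with the same sum. -/
lemma shift_summable_tsum (F : ℕ → ℝ) (j : ℕ) (h0 : ∀ b, b < j → F b = 0)
    (hs : Summable fun m => F (j + m)) :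
    Summable F ∧ ∑' b, F b = ∑' m, F (j + m) := by
  have hinj : Function.Injective (fun m => j + m) := fun a b h => by
    simpa using h
  have hsupp : Function.support F ⊆ Set.range (fun m => j + m) := by
    intro b hb
    rcases lt_or_ge b j with h | h
    · exact absurd (h0 b h) hb
    · exact ⟨b - j, by simp; omega⟩
  constructor
  · refine (summable_nat_add_iff j).mp ?_
    have : (fun n => F (n + j)) = fun m => F (j + m) := funext fun n => by rw [add_comm]
    rw [this]; exact hs
  · exact (Function.Injective.tsum_eq hinj hsupp).symm

lemma poisson_binom_shift (x δ : ℝ) (k m : ℕ) :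
    poissonP x (k + m) * binomP (k + m) δ k
      = (Real.exp (-x) * δ ^ k * x ^ k / (Nat.factorial k)) * ((x * (1 - δ)) ^ m / (Nat.factorial m)) := by
  unfold poissonP binomP
  have e1 : k + m - k = m := by omega
  have hc : ((k + m).choose k : ℝ) * (Nat.factorial k : ℝ) * (Nat.factorial m : ℝ)
      = (Nat.factorial (k + m) : ℝ) := by
    have h := Nat.choose_mul_factorial_mul_factorial (Nat.le_add_right k m)
    rw [e1] at h
    exact_mod_cast congrArg (Nat.cast : ℕ → ℝ) h
  have h1 : (Nat.factorial (k+m) : ℝ) ≠ 0 := by exact_mod_cast Nat.factorial_ne_zero (k+m)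
  have h2 : (Nat.factorial k : ℝ) ≠ 0 := by exact_mod_cast Nat.factorial_ne_zero k
  have h3 : (Nat.factorial m : ℝ) ≠ 0 := by exact_mod_cast Nat.factorial_ne_zero m
  rw [e1, pow_add, mul_pow]
  field_simp
  linear_combination (x ^ k * x ^ m * δ ^ k * (1 - δ) ^ m) * hc

lemma summable_poisson_binom (x δ : ℝ) (k : ℕ) :
    Summable (fun n => poissonP x n * binomP n δ k) := by
  refine (shift_summable_tsum _ k (fun b hb => by rw [binomP_eq_zero δ hb, mul_zero]) ?_).1
  have : (fun m => poissonP x (k + m) * binomP (k + m) δ k)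
      = fun m => (Real.exp (-x) * δ ^ k * x ^ k / (Nat.factorial k)) * ((x * (1 - δ)) ^ m / (Nat.factorial m)) :=
    funext fun m => poisson_binom_shift x δ k m
  rw [this]
  exact (Real.summable_pow_div_factorial _).mul_left _

lemma tsum_poisson_binom (x δ : ℝ) (k : ℕ) :
    ∑' n, poissonP x n * binomP n δ k = poissonP (δ * x) k := by
  rw [(shift_summable_tsum _ k (fun b hb => by rw [binomP_eq_zero δ hb, mul_zero]) ?_).2]
  · simp_rw [poisson_binom_shift]
    rw [tsum_mul_left, tsum_pow_div_factorial]
    unfold poissonP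
    rw [mul_pow, div_mul_eq_mul_div]
    rw [show Real.exp (-(δ * x)) = Real.exp (-x) * Real.exp (x * (1 - δ)) by
      rw [← Real.exp_add]; ring_nf]
    ring
  · have : (fun m => poissonP x (k + m) * binomP (k + m) δ k)
        = fun m => (Real.exp (-x) * δ ^ k * x ^ k / (Nat.factorial k)) * ((x * (1 - δ)) ^ m / (Nat.factorial m)) :=
      funext fun m => poisson_binom_shift x δ k m
    rw [this]
    exact (Real.summable_pow_div_factorial _).mul_left _
lemma conv_binomP_eq (ν : ℕ) (p : ℝ) (f : ℕ → ℝ) (b : ℕ) :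
    conv (binomP ν p) f b
      = ∑ j ∈ Finset.range (ν + 1), binomP ν p j * (if j ≤ b then f (b - j) else 0) := by
  unfold conv
  have h1 : ∑ j ∈ Finset.range (b + 1), binomP ν p j * f (b - j)
      = ∑ j ∈ Finset.range (b + 1), binomP ν p j * (if j ≤ b then f (b - j) else 0) :=
    Finset.sum_congr rfl fun j hj => by
      rw [if_pos (by simpa [Nat.lt_succ_iff] using hj)]
  rw [h1]
  set g : ℕ → ℝ := fun j => binomP ν p j * (if j ≤ b then f (b - j) else 0) with hg
  have h2 : ∑ j ∈ Finset.range (b + 1), g j = ∑ j ∈ Finset.range (max b ν + 1), g j := by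
    refine Finset.sum_subset ?_ ?_
    · intro j hj; simp only [Finset.mem_range] at *; omega
    · intro j hj hj'
      simp only [Finset.mem_range] at hj hj'
      rw [hg]; simp only []
      rw [if_neg (by omega), mul_zero]
  have h3 : ∑ j ∈ Finset.range (ν + 1), g j = ∑ j ∈ Finset.range (max b ν + 1), g j := by
    refine Finset.sum_subset ?_ ?_
    · intro j hj; simp only [Finset.mem_range] at *; omega
    · intro j hj hj'
      simp only [Finset.mem_range] at hj hj'
      rw [hg]; simp only []
      rw [binomP_eq_zero p (by omega), zero_mul]
  rw [h2, ← h3]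

lemma mk_conv (f g : ℕ → ℝ) :
    PowerSeries.mk (conv f g) = PowerSeries.mk f * PowerSeries.mk g := by
  ext k
  rw [PowerSeries.coeff_mk, PowerSeries.coeff_mul,
    Finset.Nat.sum_antidiagonal_eq_sum_range_succ_mk]
  simp [conv]

lemma conv_assoc (f g h : ℕ → ℝ) : conv (conv f g) h = conv f (conv g h) := by
  have h1 : PowerSeries.mk (conv (conv f g) h) = PowerSeries.mk (conv f (conv g h)) := by
    rw [mk_conv, mk_conv, mk_conv, mk_conv, mul_assoc]
  funext k
  have := congrArg (PowerSeries.coeff k) h1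
  simpa using this

lemma ite_shift_summable_tsum (f : ℕ → ℝ) (j : ℕ) (hf : Summable f) :
    Summable (fun a => if j ≤ a then f (a - j) else 0) ∧
    ∑' a, (if j ≤ a then f (a - j) else 0) = ∑' m, f m := by
  have h := shift_summable_tsum (fun a => if j ≤ a then f (a - j) else 0) j
    (fun b hb => by show (if j ≤ b then f (b - j) else 0) = 0; rw [if_neg (by omega)]) ?_
  · refine ⟨h.1, ?_⟩
    rw [h.2]
    congr 1
    funext m
    show (if j ≤ j + m then f (j + m - j) else 0) = f m
    rw [if_pos (by omega)]
    congr 1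
    omega
  · have : (fun m => if j ≤ j + m then f (j + m - j) else 0) = f := by
      funext m
      rw [if_pos (by omega)]
      congr 1
      omega
    rw [this]; exact hf

lemma summable_conv_binom_poisson (ν : ℕ) (p x : ℝ) :
    Summable (fun a => conv (binomP ν p) (poissonP x) a) := by
  have : (fun a => conv (binomP ν p) (poissonP x) a)
      = fun a => ∑ j ∈ Finset.range (ν + 1), binomP ν p j * (if j ≤ a then poissonP x (a - j) else 0) :=
    funext fun a => conv_binomP_eq ν p _ a
  rw [this]
  exact summable_sum fun j _ =>
    ((ite_shift_summable_tsum (poissonP x) j (summable_poissonP x)).1).mul_left _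

lemma tsum_conv_binom_poisson (ν : ℕ) (p x : ℝ) :
    ∑' a, conv (binomP ν p) (poissonP x) a = 1 := by
  have h : (fun a => conv (binomP ν p) (poissonP x) a)
      = fun a => ∑ j ∈ Finset.range (ν + 1), binomP ν p j * (if j ≤ a then poissonP x (a - j) else 0) :=
    funext fun a => conv_binomP_eq ν p _ a
  rw [h]
  rw [Summable.tsum_finsetSum fun j _ =>
    ((ite_shift_summable_tsum (poissonP x) j (summable_poissonP x)).1).mul_left _]
  have : ∀ j ∈ Finset.range (ν + 1),
      ∑' a, binomP ν p j * (if j ≤ a then poissonP x (a - j) else 0) = binomP ν p j := by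
    intro j _
    rw [tsum_mul_left, (ite_shift_summable_tsum (poissonP x) j (summable_poissonP x)).2,
      tsum_poissonP, mul_one]
  rw [Finset.sum_congr rfl this, sum_binomP]
section Key

variable (ε ζ : ℝ) (ν : ℕ) (ϖ δ : ℝ)

lemma gj_pack (j i : ℕ) :
    Summable (fun b => (if j ≤ b then poissonP ε (b - j) else 0) * binomP b δ i) ∧
    ∑' b, (if j ≤ b then poissonP ε (b - j) else 0) * binomP b δ i
      = conv (binomP j δ) (poissonP (δ * ε)) i := by
  set F : ℕ → ℝ := fun b => (if j ≤ b then poissonP ε (b - j) else 0) * binomP b δ i with hF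
  have hshift : (fun m => F (j + m))
      = fun m => ∑ k ∈ Finset.range (i + 1), binomP j δ k * (poissonP ε m * binomP m δ (i - k)) := by
    funext m
    show (if j ≤ j + m then poissonP ε (j + m - j) else 0) * binomP (j + m) δ i = _
    rw [if_pos (by omega), show j + m - j = m by omega, binomP_add, Finset.mul_sum]
    exact Finset.sum_congr rfl fun k _ => by ring
  have hs : Summable fun m => F (j + m) := by
    rw [hshift]
    exact summable_sum fun k _ => (summable_poisson_binom ε δ (i - k)).mul_left _
  have h := shift_summable_tsum F j (fun b hb => by
    show (if j ≤ b then poissonP ε (b - j) else 0) * binomP b δ i = 0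
    rw [if_neg (by omega), zero_mul]) hs
  refine ⟨h.1, ?_⟩
  rw [h.2, hshift,
    Summable.tsum_finsetSum fun k _ => (summable_poisson_binom ε δ (i - k)).mul_left _]
  unfold conv
  exact Finset.sum_congr rfl fun k _ => by
    rw [tsum_mul_left, tsum_poisson_binom]

lemma Cb_eq (i b : ℕ) :
    conv (binomP ν ϖ) (poissonP ε) b * binomP b δ i
      = ∑ j ∈ Finset.range (ν + 1),
          binomP ν ϖ j * ((if j ≤ b then poissonP ε (b - j) else 0) * binomP b δ i) := by
  rw [conv_binomP_eq, Finset.sum_mul]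
  exact Finset.sum_congr rfl fun j _ => by ring

lemma Cb_pack (i : ℕ) :
    Summable (fun b => conv (binomP ν ϖ) (poissonP ε) b * binomP b δ i) ∧
    ∑' b, conv (binomP ν ϖ) (poissonP ε) b * binomP b δ i
      = conv (binomP ν (δ * ϖ)) (poissonP (δ * ε)) i := by
  have he : (fun b => conv (binomP ν ϖ) (poissonP ε) b * binomP b δ i)
      = fun b => ∑ j ∈ Finset.range (ν + 1),
          binomP ν ϖ j * ((if j ≤ b then poissonP ε (b - j) else 0) * binomP b δ i) :=
    funext fun b => Cb_eq ε ν ϖ δ i b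
  constructor
  · rw [he]
    exact summable_sum fun j _ => ((gj_pack ε δ j i).1).mul_left _
  · rw [he, Summable.tsum_finsetSum fun j _ => ((gj_pack ε δ j i).1).mul_left _]
    have h1 : ∀ j ∈ Finset.range (ν + 1),
        ∑' b, binomP ν ϖ j * ((if j ≤ b then poissonP ε (b - j) else 0) * binomP b δ i)
          = binomP ν ϖ j * conv (binomP j δ) (poissonP (δ * ε)) i := by
      intro j _
      rw [tsum_mul_left, (gj_pack ε δ j i).2]
    rw [Finset.sum_congr rfl h1]
    unfold conv
    simp_rw [Finset.mul_sum]
    rw [Finset.sum_comm]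
    refine Finset.sum_congr rfl fun k _ => ?_
    rw [← binomP_thin ν ϖ δ k, Finset.sum_mul]
    exact Finset.sum_congr rfl fun j _ => by ring

lemma main_summable (a : ℕ) :
    Summable (fun b => conv (binomP ν ϖ) (poissonP ε) b * conv (binomP b δ) (poissonP ζ) a) := by
  have he : (fun b => conv (binomP ν ϖ) (poissonP ε) b * conv (binomP b δ) (poissonP ζ) a)
      = fun b => ∑ i ∈ Finset.range (a + 1),
          (conv (binomP ν ϖ) (poissonP ε) b * binomP b δ i) * poissonP ζ (a - i) := by
    funext b
    unfold conv
    rw [Finset.mul_sum]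
    exact Finset.sum_congr rfl fun i _ => by ring
  rw [he]
  exact summable_sum fun i _ => ((Cb_pack ε ν ϖ δ i).1).mul_right _

lemma main_tsum (a : ℕ) :
    ∑' b, conv (binomP ν ϖ) (poissonP ε) b * conv (binomP b δ) (poissonP ζ) a
      = conv (binomP ν (δ * ϖ)) (poissonP (ζ + δ * ε)) a := by
  have he : (fun b => conv (binomP ν ϖ) (poissonP ε) b * conv (binomP b δ) (poissonP ζ) a)
      = fun b => ∑ i ∈ Finset.range (a + 1),
          (conv (binomP ν ϖ) (poissonP ε) b * binomP b δ i) * poissonP ζ (a - i) := by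
    funext b
    unfold conv
    rw [Finset.mul_sum]
    exact Finset.sum_congr rfl fun i _ => by ring
  rw [he, Summable.tsum_finsetSum fun i _ => ((Cb_pack ε ν ϖ δ i).1).mul_right _]
  have h1 : ∀ i ∈ Finset.range (a + 1),
      ∑' b, (conv (binomP ν ϖ) (poissonP ε) b * binomP b δ i) * poissonP ζ (a - i)
        = conv (binomP ν (δ * ϖ)) (poissonP (δ * ε)) i * poissonP ζ (a - i) := by
    intro i _
    rw [tsum_mul_right, (Cb_pack ε ν ϖ δ i).2]
  rw [Finset.sum_congr rfl h1]
  have h2 : ∑ i ∈ Finset.range (a + 1),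
      conv (binomP ν (δ * ϖ)) (poissonP (δ * ε)) i * poissonP ζ (a - i)
        = conv (conv (binomP ν (δ * ϖ)) (poissonP (δ * ε))) (poissonP ζ) a := rfl
  rw [h2, conv_assoc, conv_poissonP, show δ * ε + ζ = ζ + δ * ε by ring]

end Key

/-- If `B ~ Po(ε) ∗ Bi(ν, ϖ)` and the conditional distribution of `A` given `B`
is `Po(ζ) ∗ Bi(B, δ)`, then `A ~ Po(ζ + δε) ∗ Bi(ν, δϖ)`. -/
theorem stmt0 {Ω : Type*} [MeasurableSpace Ω] (μ : Measure Ω) [IsProbabilityMeasure μ]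
    (A B : Ω → ℕ) (ε ζ : ℝ) (ν : ℕ) (ϖ δ : ℝ)
    (hε : 0 ≤ ε) (hζ : 0 ≤ ζ) (hϖ0 : 0 ≤ ϖ) (hϖ1 : ϖ ≤ 1) (hδ0 : 0 ≤ δ) (hδ1 : δ ≤ 1)
    (hB : ∀ b, (μ {ω | B ω = b}).toReal = conv (binomP ν ϖ) (poissonP ε) b)
    (hcond : ∀ a b, (μ {ω | A ω = a ∧ B ω = b}).toReal
      = (μ {ω | B ω = b}).toReal * conv (binomP b δ) (poissonP ζ) a) :
    ∀ a, (μ {ω | A ω = a}).toReal = conv (binomP ν (δ * ϖ)) (poissonP (ζ + δ * ε)) a := by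
  have hδϖ0 : 0 ≤ δ * ϖ := mul_nonneg hδ0 hϖ0
  have hδϖ1 : δ * ϖ ≤ 1 := by nlinarith
  have hlam : 0 ≤ ζ + δ * ε := add_nonneg hζ (mul_nonneg hδ0 hε)
  set T : ℕ → ℝ := conv (binomP ν (δ * ϖ)) (poissonP (ζ + δ * ε)) with hT
  have hTnn : ∀ x, 0 ≤ T x := fun x =>
    conv_nonneg (binomP_nonneg hδϖ0 hδϖ1) (poissonP_nonneg hlam) x
  -- each joint probability is nonnegative as a real number
  have hnn : ∀ x b, 0 ≤ conv (binomP ν ϖ) (poissonP ε) b * conv (binomP b δ) (poissonP ζ) x :=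
    fun x b => mul_nonneg
      (conv_nonneg (binomP_nonneg hϖ0 hϖ1) (poissonP_nonneg hε) b)
      (conv_nonneg (binomP_nonneg hδ0 hδ1) (poissonP_nonneg hζ) x)
  -- upper bound
  have hub : ∀ x, μ {ω | A ω = x} ≤ ENNReal.ofReal (T x) := by
    intro x
    have hset : {ω | A ω = x} = ⋃ b, {ω | A ω = x ∧ B ω = b} := by
      ext ω; simp
    rw [hset]
    refine (measure_iUnion_le _).trans ?_
    have hsum : ∀ b, μ {ω | A ω = x ∧ B ω = b}
        = ENNReal.ofReal (conv (binomP ν ϖ) (poissonP ε) b * conv (binomP b δ) (poissonP ζ) x) := by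
      intro b
      rw [← ENNReal.ofReal_toReal (measure_ne_top μ _), hcond, hB]
    rw [tsum_congr hsum,
      ← ENNReal.ofReal_tsum_of_nonneg (hnn x) (main_summable ε ζ ν ϖ δ x),
      main_tsum ε ζ ν ϖ δ x]
  -- total mass of the target distribution
  have htot : ∑' x, ENNReal.ofReal (T x) = 1 := by
    rw [← ENNReal.ofReal_tsum_of_nonneg hTnn (summable_conv_binom_poisson ν (δ * ϖ) (ζ + δ * ε)),
      hT, tsum_conv_binom_poisson, ENNReal.ofReal_one]
  -- lower bound on the total mass of A
  have hlb : (1 : ENNReal) ≤ ∑' x, μ {ω | A ω = x} := by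
    have huniv : (Set.univ : Set Ω) = ⋃ x, {ω | A ω = x} := by
      ext ω; simp
    calc (1 : ENNReal) = μ Set.univ := (measure_univ).symm
      _ = μ (⋃ x, {ω | A ω = x}) := by rw [← huniv]
      _ ≤ ∑' x, μ {ω | A ω = x} := measure_iUnion_le _
  have hfin : ∑' x, μ {ω | A ω = x} ≠ ⊤ := by
    refine ne_top_of_le_ne_top ?_ (ENNReal.tsum_le_tsum hub)
    rw [htot]; exact ENNReal.one_ne_top
  have heq : ∀ x, μ {ω | A ω = x} = ENNReal.ofReal (T x) := by
    intro x
    by_contra hne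
    have hlt : μ {ω | A ω = x} < ENNReal.ofReal (T x) := lt_of_le_of_ne (hub x) hne
    have hstrict : ∑' y, μ {ω | A ω = y} < ∑' y, ENNReal.ofReal (T y) :=
      ENNReal.tsum_lt_tsum hfin hub hlt
    rw [htot] at hstrict
    exact absurd hlb (not_le.mpr hstrict)
  intro a
  rw [heq a, ENNReal.toReal_ofReal (hTnn a)]
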